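/- Let ≺ be a strict well-order of ℕ whose order type λ is a limit ordinal. Work in the infinitary calculus over the signature (0,1,+,×,=) extended by a binary relation symbol for ≺, where the axiom rule (Ax) additionally admits finite sets Δ containing a true closed ≺-literal. Then for every pseudo-Π¹₁ formula φ(x) with exactly one free number variable, the truth-complexity of the transfinite induction formula TI(≺, φ) := (∀x((∀y(¬(y ≺ x) ∨ φ(y))) → φ(x))) → ∀x φ(x) (written in negation normal form) is at most λ + 2; that is, ⊢^{λ+2}_0 {TI(≺, φ)}. -/

import Mathlib

universe u

open Ordinal

/-- Terms of first-order arithmetic in the signature `(0, 1, +, ×)`, with (at most) `n`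
free variables, in de Bruijn representation. -/
inductive PTerm : ℕ → Type
  | var {n} : Fin n → PTerm n
  | zero {n} : PTerm n
  | one {n} : PTerm n
  | add {n} : PTerm n → PTerm n → PTerm n
  | mul {n} : PTerm n → PTerm n → PTerm n
  deriving DecidableEq

/-- Pseudo-Π¹₁ formulas (with at most `n` free number variables) in negation normal form:
built from literals of the signature `(0,1,+,×,=,≺)` (extended by a binary relation
symbol `≺`) and the atomic formulas `t ∈ X`, `t ∉ X`
for the single fixed set variable `X`, by `∧`, `∨`, `∀x`, `∃x` (de Bruijn representation). -/
inductive PForm : ℕ → Type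
  | eq {n} : PTerm n → PTerm n → PForm n
  | ne {n} : PTerm n → PTerm n → PForm n
  | mem {n} : PTerm n → PForm n
  | nmem {n} : PTerm n → PForm n
  | lt {n} : PTerm n → PTerm n → PForm n
  | nlt {n} : PTerm n → PTerm n → PForm n
  | and {n} : PForm n → PForm n → PForm n
  | or {n} : PForm n → PForm n → PForm n
  | all {n} : PForm (n + 1) → PForm n
  | ex {n} : PForm (n + 1) → PForm n
  deriving DecidableEq

namespace PTerm

/-- Evaluation of a term in the standard model `ℕ` under the environment `e`. -/
def val {n} (e : Fin n → ℕ) : PTerm n → ℕ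
  | var i => e i
  | zero => 0
  | one => 1
  | add s t => s.val e + t.val e
  | mul s t => s.val e * t.val e

/-- The value of a closed term in the standard model. -/
def val0 (t : PTerm 0) : ℕ := t.val Fin.elim0

/-- Simultaneous substitution in terms. -/
def subst {m n} (σ : Fin m → PTerm n) : PTerm m → PTerm n
  | var i => σ i
  | zero => zero
  | one => one
  | add s t => add (s.subst σ) (t.subst σ)
  | mul s t => mul (s.subst σ) (t.subst σ)

/-- Shift all free variables up by one. -/
def shift {n} (t : PTerm n) : PTerm (n + 1) := t.subst fun i => var i.succ

/-- The numeral `k̄` denoting the natural number `k`. -/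
def numeral {n} : ℕ → PTerm n
  | 0 => zero
  | k + 1 => add (numeral k) one

end PTerm

namespace PForm

/-- Negation, defined by De Morgan duality. -/
def neg {n} : PForm n → PForm n
  | eq s t => ne s t
  | ne s t => eq s t
  | mem t => nmem t
  | nmem t => mem t
  | lt s t => nlt s t
  | nlt s t => lt s t
  | and A B => or A.neg B.neg
  | or A B => and A.neg B.neg
  | all A => ex A.neg
  | ex A => all A.neg

/-- The rank of a formula: the number of logical symbols occurring in it. -/
def rk {n} : PForm n → ℕ
  | eq _ _ => 0
  | ne _ _ => 0
  | mem _ => 0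
  | nmem _ => 0
  | lt _ _ => 0
  | nlt _ _ => 0
  | and A B => A.rk + B.rk + 1
  | or A B => A.rk + B.rk + 1
  | all A => A.rk + 1
  | ex A => A.rk + 1

/-- Lift a substitution under a binder. -/
def liftSubst {m n} (σ : Fin m → PTerm n) : Fin (m + 1) → PTerm (n + 1) :=
  Fin.cases (PTerm.var 0) fun i => (σ i).shift

/-- Simultaneous substitution in formulas. -/
def subst : {m n : ℕ} → (Fin m → PTerm n) → PForm m → PForm n
  | _, _, σ, eq s t => eq (s.subst σ) (t.subst σ)
  | _, _, σ, ne s t => ne (s.subst σ) (t.subst σ)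
  | _, _, σ, mem t => mem (t.subst σ)
  | _, _, σ, nmem t => nmem (t.subst σ)
  | _, _, σ, lt s t => lt (s.subst σ) (t.subst σ)
  | _, _, σ, nlt s t => nlt (s.subst σ) (t.subst σ)
  | _, _, σ, and A B => and (A.subst σ) (B.subst σ)
  | _, _, σ, or A B => or (A.subst σ) (B.subst σ)
  | _, _, σ, all A => all (A.subst (liftSubst σ))
  | _, _, σ, ex A => ex (A.subst (liftSubst σ))

/-- `A.inst k` is `A(k̄)`: the result of substituting the numeral `k̄` for the free
variable of `A`. -/
def inst (A : PForm 1) (k : ℕ) : PForm 0 := A.subst fun _ => PTerm.numeral k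

/-- Truth of a pseudo-Π¹₁ formula in the standard model `ℕ`, with the set variable `X`
interpreted as `S` and the environment `e`. -/
def Sat (R : ℕ → ℕ → Prop) (S : Set ℕ) : {n : ℕ} → (Fin n → ℕ) → PForm n → Prop
  | _, e, eq s t => s.val e = t.val e
  | _, e, ne s t => s.val e ≠ t.val e
  | _, e, mem t => t.val e ∈ S
  | _, e, nmem t => t.val e ∉ S
  | _, e, lt s t => R (s.val e) (t.val e)
  | _, e, nlt s t => ¬ R (s.val e) (t.val e)
  | _, e, and A B => A.Sat R S e ∧ B.Sat R S e
  | _, e, or A B => A.Sat R S e ∨ B.Sat R S e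
  | _, e, all A => ∀ k : ℕ, A.Sat R S (Fin.cons k e)
  | _, e, ex A => ∃ k : ℕ, A.Sat R S (Fin.cons k e)

end PForm

/-- The infinitary (ω-logic) derivability relation `⊢^α_ρ Δ` for finite sets `Δ` of closed
pseudo-Π¹₁ formulas: derivations of height `α` with all cut formulas of rank `< ρ`. -/
inductive Der (R : ℕ → ℕ → Prop) : Ordinal.{u} → Ordinal.{u} → Finset (PForm 0) → Prop
  /-- (Ax): `Δ` contains a true closed literal of the first-order signature, or contains
  `s ∉ X` and `t ∈ X` for closed terms `s, t` with the same value. -/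
  | ax {α ρ Δ} :
      ((∃ s t : PTerm 0, (PForm.eq s t ∈ Δ ∧ s.val0 = t.val0) ∨
          (PForm.ne s t ∈ Δ ∧ s.val0 ≠ t.val0) ∨
          (PForm.lt s t ∈ Δ ∧ R s.val0 t.val0) ∨
          (PForm.nlt s t ∈ Δ ∧ ¬ R s.val0 t.val0)) ∨
        (∃ s t : PTerm 0, PForm.nmem s ∈ Δ ∧ PForm.mem t ∈ Δ ∧ s.val0 = t.val0)) →
      Der R α ρ Δ
  /-- (∧) -/
  | and {α α₁ α₂ ρ Δ} {A₁ A₂ : PForm 0} : Der R α₁ ρ (insert A₁ Δ) → Der R α₂ ρ (insert A₂ Δ) →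
      α₁ < α → α₂ < α → Der R α ρ (insert (PForm.and A₁ A₂) Δ)
  /-- (∨), left disjunct -/
  | orl {α α₀ ρ Δ} {A₁ A₂ : PForm 0} : Der R α₀ ρ (insert A₁ Δ) → α₀ < α →
      Der R α ρ (insert (PForm.or A₁ A₂) Δ)
  /-- (∨), right disjunct -/
  | orr {α α₀ ρ Δ} {A₁ A₂ : PForm 0} : Der R α₀ ρ (insert A₂ Δ) → α₀ < α →
      Der R α ρ (insert (PForm.or A₁ A₂) Δ)
  /-- (ω) -/
  | all {α ρ Δ} {A : PForm 1} (β : ℕ → Ordinal.{u}) : (∀ k : ℕ, β k < α) →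
      (∀ k : ℕ, Der R (β k) ρ (insert (A.inst k) Δ)) → Der R α ρ (insert (PForm.all A) Δ)
  /-- (∃) -/
  | ex {α α₀ ρ Δ} {A : PForm 1} (k : ℕ) : Der R α₀ ρ (insert (A.inst k) Δ) → α₀ < α →
      Der R α ρ (insert (PForm.ex A) Δ)
  /-- (Cut) -/
  | cut {α α₁ α₂ ρ Δ} {F : PForm 0} : Der R α₁ ρ (insert F Δ) → Der R α₂ ρ (insert F.neg Δ) →
      α₁ < α → α₂ < α → (F.rk : Ordinal) < ρ → Der R α ρ Δ

/-- The transfinite induction formula `TI(≺, φ)`, in negation normal form: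
`∃x ((∀y (¬(y ≺ x) ∨ φ(y))) ∧ ¬φ(x)) ∨ ∀x φ(x)`, i.e. the NNF of
`(∀x ((∀y (¬(y ≺ x) ∨ φ(y))) → φ(x))) → ∀x φ(x)`. -/
def TI (φ : PForm 1) : PForm 0 :=
  .or
    (.ex (.and
      (.all (.or (.nlt (.var 0) (.var 1)) (φ.subst fun _ => .var 0)))
      φ.neg))
    (.all φ)

/-!
Write `¬Prog(φ)` for `∃x (∀y (y ⊀ x ∨ φ(y)) ∧ ¬φ(x))`, the left disjunct of `TI φ`, and `|n|`
for the `≺`-rank of `n`. By induction along `≺`, `⊢^{4·|n| + 2·rk φ + 4}_0 ¬Prog(φ), φ(n̄)`: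
the induction hypotheses (or an axiom, when `m ⊀ n`) give `m̄ ⊀ n̄ ∨ φ(m̄)` for every `m`, the
ω-rule gives `∀y (y ⊀ n̄ ∨ φ(y))`, tertium non datur gives `¬φ(n̄), φ(n̄)`, and an ∧- and an
∃-inference give `¬Prog(φ)`; these four inferences per level account for the factor 4.
As `4·β ≤ β + j` for some finite `j`, these heights stay below the limit `λ`, so the ω-rule
derives `¬Prog(φ), ∀x φ(x)` at height `λ`, and two ∨-inferences give `TI φ` at height `λ + 2`.
-/

namespace PTerm

@[simp] lemma val_numeral {n} (e : Fin n → ℕ) (k : ℕ) : (numeral k).val e = k := by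
  induction k with
  | zero => rfl
  | succ k ih => simp [numeral, val, ih]

@[simp] lemma val0_numeral (k : ℕ) : (numeral k).val0 = k := val_numeral _ _

@[simp] lemma subst_numeral {m n} (σ : Fin m → PTerm n) (k : ℕ) :
    (numeral k).subst σ = numeral k := by
  induction k with
  | zero => rfl
  | succ k ih => simp [numeral, subst, ih]

lemma subst_subst {m n p} (σ : Fin m → PTerm n) (τ : Fin n → PTerm p) (t : PTerm m) :
    (t.subst σ).subst τ = t.subst fun i => (σ i).subst τ := by
  induction t <;> simp [subst, *]

@[simp] lemma subst_var {n} (t : PTerm n) : t.subst var = t := by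
  induction t <;> simp [subst, *]

end PTerm

namespace PForm

@[simp] lemma liftSubst_var {n} : liftSubst (n := n) PTerm.var = PTerm.var := by
  funext j
  cases j using Fin.cases <;> rfl

lemma liftSubst_comp {m n p} (σ : Fin m → PTerm n) (τ : Fin n → PTerm p) :
    liftSubst (fun i => (σ i).subst τ) = fun j => (liftSubst σ j).subst (liftSubst τ) := by
  funext j
  cases j using Fin.cases <;> simp [liftSubst, PTerm.shift, PTerm.subst, PTerm.subst_subst]

lemma subst_subst {m n p} (σ : Fin m → PTerm n) (τ : Fin n → PTerm p) (A : PForm m) :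
    (A.subst σ).subst τ = A.subst fun i => (σ i).subst τ := by
  induction A generalizing n p <;> simp [subst, PTerm.subst_subst, liftSubst_comp, *]

@[simp] lemma subst_var {n} (A : PForm n) : A.subst PTerm.var = A := by
  induction A <;> simp [subst, *]

lemma neg_subst {m n} (σ : Fin m → PTerm n) (A : PForm m) : (A.subst σ).neg = A.neg.subst σ := by
  induction A generalizing n <;> simp [subst, neg, *]

@[simp] lemma rk_subst {m n} (σ : Fin m → PTerm n) (A : PForm m) : (A.subst σ).rk = A.rk := by
  induction A generalizing n <;> simp [subst, rk, *]

@[simp] lemma rk_inst (A : PForm 1) (k : ℕ) : (A.inst k).rk = A.rk := rk_subst _ _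

lemma neg_inst (A : PForm 1) (k : ℕ) : (A.inst k).neg = A.neg.inst k := neg_subst _ _

end PForm

namespace Der

variable {R : ℕ → ℕ → Prop} {α ρ : Ordinal.{u}} {Δ : Finset (PForm 0)}

lemma of_nlt_mem {s t : PTerm 0} (h : PForm.nlt s t ∈ Δ) (hst : ¬ R s.val0 t.val0) :
    Der R α ρ Δ :=
  ax (.inl ⟨s, t, .inr (.inr (.inr ⟨h, hst⟩))⟩)

lemma of_and_mem {α₁ α₂ : Ordinal.{u}} {A₁ A₂ : PForm 0} (h : A₁.and A₂ ∈ Δ)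
    (h₁ : Der R α₁ ρ (insert A₁ Δ)) (h₂ : Der R α₂ ρ (insert A₂ Δ)) (hα₁ : α₁ < α)
    (hα₂ : α₂ < α) : Der R α ρ Δ :=
  Finset.insert_eq_of_mem h ▸ and h₁ h₂ hα₁ hα₂

lemma of_or_mem_left {α₀ : Ordinal.{u}} {A₁ A₂ : PForm 0} (h : A₁.or A₂ ∈ Δ)
    (h₀ : Der R α₀ ρ (insert A₁ Δ)) (hα₀ : α₀ < α) : Der R α ρ Δ :=
  Finset.insert_eq_of_mem h ▸ orl h₀ hα₀

lemma of_or_mem_right {α₀ : Ordinal.{u}} {A₁ A₂ : PForm 0} (h : A₁.or A₂ ∈ Δ)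
    (h₀ : Der R α₀ ρ (insert A₂ Δ)) (hα₀ : α₀ < α) : Der R α ρ Δ :=
  Finset.insert_eq_of_mem h ▸ orr h₀ hα₀

lemma of_all_mem {A : PForm 1} (h : A.all ∈ Δ) (β : ℕ → Ordinal.{u}) (hβ : ∀ k, β k < α)
    (hk : ∀ k, Der R (β k) ρ (insert (A.inst k) Δ)) : Der R α ρ Δ :=
  Finset.insert_eq_of_mem h ▸ all β hβ hk

lemma of_ex_mem {α₀ : Ordinal.{u}} {A : PForm 1} (h : A.ex ∈ Δ) (k : ℕ)
    (h₀ : Der R α₀ ρ (insert (A.inst k) Δ)) (hα₀ : α₀ < α) : Der R α ρ Δ :=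
  Finset.insert_eq_of_mem h ▸ ex k h₀ hα₀

theorem tertium_non_datur : ∀ (F : PForm 0) {Δ : Finset (PForm 0)}, F ∈ Δ → F.neg ∈ Δ →
    Der R (2 * F.rk : ℕ) 0 Δ
  | .eq s t, _, h, h' => ax (.inl ⟨s, t, by by_cases s.val0 = t.val0 <;> simp_all [PForm.neg]⟩)
  | .ne s t, _, h, h' => ax (.inl ⟨s, t, by by_cases s.val0 = t.val0 <;> simp_all [PForm.neg]⟩)
  | .lt s t, _, h, h' => ax (.inl ⟨s, t, by by_cases R s.val0 t.val0 <;> simp_all [PForm.neg]⟩)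
  | .nlt s t, _, h, h' => ax (.inl ⟨s, t, by by_cases R s.val0 t.val0 <;> simp_all [PForm.neg]⟩)
  | .mem t, _, h, h' => ax (.inr ⟨t, t, h', h, rfl⟩)
  | .nmem t, _, h, h' => ax (.inr ⟨t, t, h, h', rfl⟩)
  | .and A B, _, h, h' => by
    simp only [PForm.neg] at h'
    refine of_and_mem h (α₁ := (2 * A.rk + 1 : ℕ)) (α₂ := (2 * B.rk + 1 : ℕ)) ?_ ?_ ?_ ?_
    · exact of_or_mem_left (Finset.mem_insert_of_mem h')
        (tertium_non_datur A (by simp) (by simp)) (by simp)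
    · exact of_or_mem_right (Finset.mem_insert_of_mem h')
        (tertium_non_datur B (by simp) (by simp)) (by simp)
    all_goals simp only [PForm.rk, Nat.cast_lt]; omega
  | .or A B, _, h, h' => by
    simp only [PForm.neg] at h'
    refine of_and_mem h' (α₁ := (2 * A.rk + 1 : ℕ)) (α₂ := (2 * B.rk + 1 : ℕ)) ?_ ?_ ?_ ?_
    · exact of_or_mem_left (Finset.mem_insert_of_mem h)
        (tertium_non_datur A (by simp) (by simp)) (by simp)
    · exact of_or_mem_right (Finset.mem_insert_of_mem h)
        (tertium_non_datur B (by simp) (by simp)) (by simp)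
    all_goals simp only [PForm.rk, Nat.cast_lt]; omega
  | .all A, _, h, h' => by
    simp only [PForm.neg] at h'
    refine of_all_mem h (fun _ => (2 * A.rk + 1 : ℕ)) (fun _ => ?_) fun k => ?_
    · simp only [PForm.rk, Nat.cast_lt]; omega
    refine of_ex_mem (Finset.mem_insert_of_mem h') k (α₀ := (2 * A.rk : ℕ)) ?_ (by simp)
    simpa using tertium_non_datur (A.inst k) (by simp) (by simp [PForm.neg_inst])
  | .ex A, _, h, h' => by
    simp only [PForm.neg] at h'
    refine of_all_mem h' (fun _ => (2 * A.rk + 1 : ℕ)) (fun _ => ?_) fun k => ?_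
    · simp only [PForm.rk, Nat.cast_lt]; omega
    refine of_ex_mem (Finset.mem_insert_of_mem h) k (α₀ := (2 * A.rk : ℕ)) ?_ (by simp)
    simpa using tertium_non_datur (A.inst k) (by simp) (by simp [PForm.neg_inst])
termination_by F => F.rk
decreasing_by all_goals simp only [PForm.rk, PForm.rk_inst]; omega

end Der

namespace Ordinal

lemma natCast_mul_le_add_natCast (d : ℕ) (b : Ordinal) : ∃ j : ℕ, (d : Ordinal) * b ≤ b + j := by
  obtain ⟨j, hj⟩ := lt_omega0.mp (mod_lt b omega0_ne_zero)
  refine ⟨d * j, ?_⟩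
  have hdω : (d : Ordinal) * ω ≤ ω := by
    rcases Nat.eq_zero_or_pos d with rfl | hd
    · simp
    · rw [natCast_mul_omega0 hd]
  conv_lhs => rw [← div_add_mod b ω, hj, mul_add, ← mul_assoc]
  calc (d : Ordinal) * ω * (b / ω) + d * j ≤ ω * (b / ω) + d * j := by gcongr
    _ ≤ b + (d * j : ℕ) := by push_cast; gcongr; exact mul_div_le b ω

lemma natCast_mul_add_natCast_lt_of_isSuccLimit {l b : Ordinal} (hl : Order.IsSuccLimit l)
    (hb : b < l) (d k : ℕ) : (d : Ordinal) * b + k < l := by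
  obtain ⟨j, hj⟩ := natCast_mul_le_add_natCast d b
  calc (d : Ordinal) * b + k ≤ b + j + k := by gcongr
    _ = b + (j + k : ℕ) := by push_cast; rw [add_assoc]
    _ < l := hl.add_natCast_lt hb _

lemma natCast_mul_add_natCast_lt_of_lt {a b : Ordinal} (h : a < b) {d j k : ℕ}
    (hjk : j < d + k) : (d : Ordinal) * a + j < d * b + k :=
  calc (d : Ordinal) * a + j < d * a + (d + k : ℕ) := by gcongr
    _ = d * (a + 1) + k := by push_cast; rw [mul_add_one, add_assoc]
    _ ≤ d * b + k := by gcongr; exact Order.add_one_le_iff.mpr h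

end Ordinal

namespace PForm

def allBelow (φ : PForm 1) : PForm 1 :=
  .all (.or (.nlt (.var 0) (.var 1)) (φ.subst fun _ => .var 0))

def notProg (φ : PForm 1) : PForm 0 := .ex (.and φ.allBelow φ.neg)

lemma inst_and (A B : PForm 1) (k : ℕ) : (A.and B).inst k = (A.inst k).and (B.inst k) := rfl

lemma inst_or (A B : PForm 1) (k : ℕ) : (A.or B).inst k = (A.inst k).or (B.inst k) := rfl

lemma inst_nlt_var_numeral (n k : ℕ) :
    (PForm.nlt (.var 0) (.numeral n)).inst k = .nlt (.numeral k) (.numeral n) := by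
  simp [inst, subst, PTerm.subst]

lemma inst_allBelow (φ : PForm 1) (n : ℕ) :
    φ.allBelow.inst n = .all (.or (.nlt (.var 0) (.numeral n)) φ) := by
  have hvar : (fun _ => PTerm.var 0 : Fin 1 → PTerm 1) = PTerm.var :=
    funext fun i => by rw [Fin.fin_one_eq_zero i]
  simp [allBelow, inst, subst, PTerm.subst, subst_subst, liftSubst, PTerm.shift, hvar]
  rfl

end PForm

theorem Der.of_notProg_mem_of_inst_mem {r : ℕ → ℕ → Prop} [IsWellOrder ℕ r] {φ : PForm 1} (n : ℕ)
    {Δ : Finset (PForm 0)} (hC : φ.notProg ∈ Δ) (hφ : φ.inst n ∈ Δ) :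
    Der r (4 * typein r n + (2 * φ.rk + 4 : ℕ)) 0 Δ := by
  induction n using IsWellFounded.induction r generalizing Δ with
  | ind n ih =>
  set a := typein r n
  set c := 2 * φ.rk
  refine Der.of_ex_mem hC n (α₀ := 4 * a + (c + 3 : ℕ)) ?_ (by gcongr; omega)
  rw [PForm.inst_and, PForm.inst_allBelow, ← PForm.neg_inst]
  refine Der.of_and_mem (Finset.mem_insert_self _ _) (α₁ := 4 * a + (c + 2 : ℕ)) (α₂ := c)
    ?_ ?_ (by gcongr; omega) ((Nat.cast_lt.2 (by omega)).trans_le le_add_self)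
  · refine Der.of_all_mem (Finset.mem_insert_self _ _) (fun _ => 4 * a + (c + 1 : ℕ))
      (fun _ => by gcongr; omega) fun m => ?_
    rw [PForm.inst_or, PForm.inst_nlt_var_numeral]
    by_cases hm : r m n
    · refine Der.of_or_mem_right (Finset.mem_insert_self _ _)
        (ih m hm (by simp [hC]) (by simp)) ?_
      exact_mod_cast Ordinal.natCast_mul_add_natCast_lt_of_lt (d := 4) ((typein_lt_typein r).2 hm)
        (by omega)
    · refine Der.of_or_mem_left (Finset.mem_insert_self _ _) (α₀ := 0)
        (Der.of_nlt_mem (Finset.mem_insert_self _ _) (by simpa using hm))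
        (by positivity)
  · simpa [c] using Der.tertium_non_datur (R := r) (φ.inst n) (by simp [hφ])
      (by simp [PForm.neg_inst])

/-- Theorem 4.4 / Proposition 4.5; Pohlers, Theorem 1.3.10.
Let `≺` be a strict well-order of `ℕ` whose order type `λ` is a limit ordinal.  In the
infinitary calculus over the signature extended by `≺`, for every pseudo-Π¹₁ formula
`φ(x)` with one free number variable, the truth-complexity of `TI(≺, φ)` is at most
`λ + 2`, i.e. `⊢^{λ+2}_0 {TI(≺, φ)}`. -/
theorem tc_TI_le (r : ℕ → ℕ → Prop) [IsWellOrder ℕ r]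
    (hlim : Order.IsSuccLimit (Ordinal.type r)) (φ : PForm 1) :
    Der r (Ordinal.type r + 2) 0 {TI φ} := by
  have hTI : PForm.or φ.notProg φ.all ∈ ({TI φ} : Finset (PForm 0)) := Finset.mem_singleton_self _
  refine Der.of_or_mem_left hTI (α₀ := type r + 1) ?_ (by gcongr; norm_num)
  refine Der.of_or_mem_right (Finset.mem_insert_of_mem hTI) ?_ (Order.lt_add_one_iff.2 le_rfl)
  refine Der.of_all_mem (Finset.mem_insert_self _ _)
    (fun k => 4 * typein r k + (2 * φ.rk + 4 : ℕ)) (fun k => ?_)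
    fun k => Der.of_notProg_mem_of_inst_mem k (by simp) (by simp)
  exact_mod_cast natCast_mul_add_natCast_lt_of_isSuccLimit hlim (typein_lt_type r k) 4 _
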